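/- Let G act on a simplicial complex K by exchangeable vertices. Suppose {G·v_i}_{i∈I} spans a simplex in the orbit space K/G, witnessed by representatives u_i ∈ G·v_i with {u_i}_{i∈I} a simplex of K. Then for every other choice of representatives w_i ∈ G·v_i, the set {w_i}_{i∈I} also spans a simplex of K; moreover there exists g ∈ G with g·u_i = w_i and g·w_i = u_i for all i, and g fixing every vertex not among the u_i or w_i. -/

import Mathlib

variable {V : Type*}

def IsComplex (F : Set (Finset V)) : Prop :=
  (∀ s ∈ F, s.Nonempty) ∧ ∀ s ∈ F, ∀ t ⊆ s, t.Nonempty → t ∈ F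

def IsAuto [DecidableEq V] (F : Set (Finset V)) (φ : Equiv.Perm V) : Prop :=
  ∀ s : Finset V, s ∈ F ↔ s.image φ ∈ F

def IsExchange [DecidableEq V] (F : Set (Finset V)) (u v : V) (φ : Equiv.Perm V) : Prop :=
  IsAuto F φ ∧ φ u = v ∧ φ v = u ∧ ∀ w : V, w ≠ u → w ≠ v → φ w = w

def Exchangeable [DecidableEq V] (F : Set (Finset V)) (u v : V) : Prop :=
  ∃ φ : Equiv.Perm V, IsExchange F u v φ

def vertices (F : Set (Finset V)) : Set V := {v | ({v} : Finset V) ∈ F}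

def quotFaces (F : Set (Finset V)) (G : Subgroup (Equiv.Perm V)) : Set (Finset (Set V)) :=
  {S | ∃ s ∈ F, (↑S : Set (Set V)) = (fun v => MulAction.orbit (↥G) v) '' ↑s}

def ActsByExch [DecidableEq V] (F : Set (Finset V)) (G : Subgroup (Equiv.Perm V)) : Prop :=
  ∃ M : Set (Equiv.Perm V), G = Subgroup.closure M ∧
    ∀ φ ∈ M, ∃ u v : V, u ≠ v ∧ IsExchange F u v φ

def fullSubFaces (F : Set (Finset V)) (W : Set V) : Set (Finset V) :=
  {s ∈ F | ↑s ⊆ W}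

/-!
Each generating exchange of `G` is a transposition `swap a b` that is an automorphism of `F`, so
`G` consists of automorphisms and, being generated by transpositions, contains `swap x y` exactly
when `x` and `y` lie in one orbit (`swap_mem_closure_isSwap`). The orbits `G·(v i)` are distinct,
so the pairs `{u i, w i}` are pairwise disjoint and the product of the transpositions
`swap (u i) (w i)` exchanges every `u i` with `w i` and fixes all other vertices. This element of
`G` is an automorphism, so it carries the simplex `{u i}` onto `{w i}`.
-/

open Equiv MulAction Subgroup Function

section

variable [DecidableEq V]

def autGroup (F : Set (Finset V)) : Subgroup (Perm V) where
  carrier := {φ | IsAuto F φ}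
  mul_mem' {φ ψ} hφ hψ s := by
    rw [hψ s, hφ (s.image ψ), Finset.image_image]
    rfl
  one_mem' s := by simp
  inv_mem' {φ} hφ s := by simpa [Finset.image_image] using (hφ (s.image ⇑φ⁻¹)).symm

@[simp]
theorem mem_autGroup {F : Set (Finset V)} {φ : Perm V} : φ ∈ autGroup F ↔ IsAuto F φ := Iff.rfl

theorem IsExchange.eq_swap {F : Set (Finset V)} {u v : V} {φ : Perm V}
    (h : IsExchange F u v φ) : φ = swap u v := by
  obtain ⟨-, hu, hv, hfix⟩ := h
  ext x
  rw [swap_apply_def]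
  split_ifs with hxu hxv
  · rw [hxu, hu]
  · rw [hxv, hv]
  · exact hfix x hxu hxv

theorem ActsByExch.le_autGroup {F : Set (Finset V)} {G : Subgroup (Perm V)}
    (hG : ActsByExch F G) : G ≤ autGroup F := by
  obtain ⟨M, rfl, hM⟩ := hG
  refine closure_le _ |>.2 fun φ hφ => ?_
  obtain ⟨_, _, _, h⟩ := hM φ hφ
  exact mem_autGroup.2 h.1

theorem ActsByExch.swap_mem {F : Set (Finset V)} {G : Subgroup (Perm V)}
    (hG : ActsByExch F G) {x y : V} (h : x ∈ orbit G y) : swap x y ∈ G := by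
  obtain ⟨M, rfl, hM⟩ := hG
  refine (swap_mem_closure_isSwap fun φ hφ => ?_).2 h
  obtain ⟨a, b, hab, h⟩ := hM φ hφ
  exact ⟨a, b, hab, h.eq_swap⟩

theorem exists_mem_swapping_pairs {I : Type*} (H : Subgroup (Perm V)) (u w : I → V)
    (hdisj : Pairwise (Disjoint on fun i => ({u i, w i} : Set V)))
    (hH : ∀ i, swap (u i) (w i) ∈ H) (s : Finset I) :
    ∃ g ∈ H, (∀ i ∈ s, g (u i) = w i ∧ g (w i) = u i) ∧
      ∀ x : V, (∀ i ∈ s, x ≠ u i ∧ x ≠ w i) → g x = x := by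
  classical
  induction s using Finset.induction_on with
  | empty => exact ⟨1, one_mem H, by simp, fun _ _ => rfl⟩
  | insert a s ha ih =>
    obtain ⟨g, hgH, hg_swap, hg_fix⟩ := ih
    have hsep {i : I} (hi : i ∈ s) : (u a ≠ u i ∧ u a ≠ w i) ∧ (w a ≠ u i ∧ w a ≠ w i) := by
      have h := hdisj (ne_of_mem_of_not_mem hi ha).symm
      refine ⟨⟨?_, ?_⟩, ?_, ?_⟩ <;> exact h.ne_of_mem (by simp) (by simp)
    refine ⟨swap (u a) (w a) * g, mul_mem (hH a) hgH, fun i hi => ?_, fun x hx => ?_⟩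
    · rcases Finset.mem_insert.1 hi with rfl | hi
      · simp [hg_fix (u i) fun j hj => (hsep hj).1, hg_fix (w i) fun j hj => (hsep hj).2]
      · simp only [Perm.mul_apply, hg_swap i hi]
        exact ⟨swap_apply_of_ne_of_ne (hsep hi).1.2.symm (hsep hi).2.2.symm,
          swap_apply_of_ne_of_ne (hsep hi).1.1.symm (hsep hi).2.1.symm⟩
    · rw [Perm.mul_apply, hg_fix x fun i hi => hx i (Finset.mem_insert_of_mem hi)]
      exact swap_apply_of_ne_of_ne (hx a (Finset.mem_insert_self a s)).1
        (hx a (Finset.mem_insert_self a s)).2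

end

theorem representatives_span_simplex_general [DecidableEq V] (F : Set (Finset V))
    (G : Subgroup (Equiv.Perm V)) (hG : ActsByExch F G)
    {I : Type*} [Fintype I] (v u w : I → V)
    (hinj : Function.Injective (fun i => MulAction.orbit (↥G) (v i)))
    (hu : ∀ i, u i ∈ MulAction.orbit (↥G) (v i))
    (hw : ∀ i, w i ∈ MulAction.orbit (↥G) (v i))
    (hs : Finset.univ.image u ∈ F) :
    Finset.univ.image w ∈ F ∧
    ∃ g ∈ G, (∀ i, g (u i) = w i ∧ g (w i) = u i) ∧
      ∀ x : V, (∀ i, x ≠ u i ∧ x ≠ w i) → g x = x := by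
  have horbit (i : I) : ∀ x ∈ ({u i, w i} : Set V), orbit G x = orbit G (v i) := by
    rintro x (rfl | rfl)
    exacts [orbit_eq_iff.2 (hu i), orbit_eq_iff.2 (hw i)]
  have hdisj : Pairwise (Disjoint on fun i => ({u i, w i} : Set V)) := fun i j hij =>
    Set.disjoint_left.2 fun x hxi hxj =>
      hij <| hinj <| (horbit i x hxi).symm.trans (horbit j x hxj)
  have hswap (i : I) : swap (u i) (w i) ∈ G :=
    hG.swap_mem <| (horbit i (w i) (by simp)).symm ▸ hu i
  obtain ⟨g, hgG, hg_swap, hg_fix⟩ := exists_mem_swapping_pairs G u w hdisj hswap Finset.univ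
  refine ⟨?_, g, hgG, fun i => hg_swap i (Finset.mem_univ i), fun x hx => hg_fix x fun i _ => hx i⟩
  have hg_image : (Finset.univ.image u).image g = Finset.univ.image w := by
    rw [Finset.image_image]
    exact Finset.image_congr fun i _ => (hg_swap i (Finset.mem_univ i)).1
  rw [← hg_image]
  exact (hG.le_autGroup hgG _).1 hs

/-- Let `G` act on `F` by exchangeable vertices, and suppose the distinct orbits
`G·(v i)` span a simplex of `F/G`, witnessed by representatives `u i ∈ G·(v i)` with
`{u i}` a simplex of `F`. Then any other system of representatives `w i ∈ G·(v i)`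
also spans a simplex of `F`, and some `g ∈ G` swaps each `u i` with `w i` while fixing
every vertex not among them. -/
theorem representatives_span_simplex [DecidableEq V] (F : Set (Finset V)) (hF : IsComplex F)
    (G : Subgroup (Equiv.Perm V)) (hG : ActsByExch F G)
    {I : Type*} [Fintype I] (v u w : I → V)
    (hinj : Function.Injective (fun i => MulAction.orbit (↥G) (v i)))
    (hu : ∀ i, u i ∈ MulAction.orbit (↥G) (v i))
    (hw : ∀ i, w i ∈ MulAction.orbit (↥G) (v i))
    (hs : Finset.univ.image u ∈ F) :
    Finset.univ.image w ∈ F ∧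
    ∃ g ∈ G, (∀ i, g (u i) = w i ∧ g (w i) = u i) ∧
      ∀ x : V, (∀ i, x ≠ u i ∧ x ≠ w i) → g x = x :=
  representatives_span_simplex_general F G hG v u w hinj hu hw hs
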